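/- Let a > 0 and b > 0, and set η̄(t) = −b ∫_0^t e^{−a²s} q^b(s) ds for t ≥ 0. Then q^b(s) > 0 for all s > 0, so η̄ is strictly decreasing on [0, ∞); moreover ∫_0^∞ e^{−a²s} q^b(s) ds = 1/(a + b), and consequently η̄(t) → −b/(b + a) as t → ∞. -/

import Mathlib

/-!
Write `g_μ(t) = e^{μ²t} erfc(μ√t)`, so that `q^μ = f_{1/2}^0 − μ g_μ` and `g_μ' = −μ q^μ`.
Mills' bound `erfc x < e^{−x²} / (x√π)` gives `μ g_μ < f_{1/2}^0`, i.e. `q^μ > 0`, and `μ g_μ → 0`.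
For `a ≠ b` the function `e^{−a²s} (a g_a(s) − b g_b(s)) / (b² − a²)` is an antiderivative of
`e^{−a²s} q^b(s)` that equals `−1/(a+b)` at `0` and vanishes at infinity. The case `a = b` is
squeezed between its neighbours, the integral being antitone in `a`.
-/

open MeasureTheory

/-- The complementary error function `erfc(s) = (2/√π) ∫_s^∞ e^{−τ²} dτ`. -/
noncomputable def erfc (s : ℝ) : ℝ :=
  (2 / Real.sqrt Real.pi) * ∫ τ in Set.Ioi s, Real.exp (-τ ^ 2)

/-- `q^μ(t) = f_{1/2}^0(t) − μ e^{μ²t} erfc(μ√t)` with `f_{1/2}^0(t) = t^{-1/2}/√π`. -/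
noncomputable def qFun (μ t : ℝ) : ℝ :=
  t ^ (-(1 : ℝ) / 2) / Real.sqrt Real.pi - μ * Real.exp (μ ^ 2 * t) * erfc (μ * Real.sqrt t)

open Real Set Filter Topology

lemma integrableOn_exp_neg_sq (s : Set ℝ) : IntegrableOn (fun τ : ℝ => exp (-τ ^ 2)) s := by
  simpa using (integrable_exp_neg_mul_sq one_pos).integrableOn (s := s)

lemma integrableOn_mul_exp_neg_sq (s : Set ℝ) :
    IntegrableOn (fun τ : ℝ => τ * exp (-τ ^ 2)) s := by
  simpa using (integrable_mul_exp_neg_mul_sq one_pos).integrableOn (s := s)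

lemma erfc_eq_one_sub_integral (x : ℝ) :
    erfc x = 1 - 2 / √π * ∫ τ in (0 : ℝ)..x, exp (-τ ^ 2) := by
  have half_line : ∫ τ in Ioi (0 : ℝ), exp (-τ ^ 2) = √π / 2 := by
    simpa using integral_gaussian_Ioi 1
  have split := intervalIntegral.integral_interval_add_Ioi (integrableOn_exp_neg_sq (Ioi 0))
    (integrableOn_exp_neg_sq (Ioi x))
  have tail : ∫ τ in Ioi x, exp (-τ ^ 2) = √π / 2 - ∫ τ in (0 : ℝ)..x, exp (-τ ^ 2) := by
    linarith
  have : √π ≠ 0 := by positivity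
  rw [erfc, tail]
  field_simp

lemma hasDerivAt_erfc (x : ℝ) : HasDerivAt erfc (-(2 / √π * exp (-x ^ 2))) x := by
  have hFTC := ((by fun_prop : Continuous fun τ : ℝ => exp (-τ ^ 2)).integral_hasStrictDerivAt
    0 x).hasDerivAt
  rw [funext erfc_eq_one_sub_integral]
  simpa using (hFTC.const_mul (2 / √π)).const_sub 1

lemma continuous_erfc : Continuous erfc :=
  continuous_iff_continuousAt.2 fun x => (hasDerivAt_erfc x).continuousAt

lemma erfc_zero : erfc 0 = 1 := by
  simp [erfc_eq_one_sub_integral]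

lemma erfc_nonneg (x : ℝ) : 0 ≤ erfc x :=
  mul_nonneg (by positivity) (setIntegral_nonneg measurableSet_Ioi fun _ _ => (exp_pos _).le)

lemma integral_Ioi_mul_exp_neg_sq {x : ℝ} (hx : 0 ≤ x) :
    ∫ τ in Ioi x, τ * exp (-τ ^ 2) = exp (-x ^ 2) / 2 := by
  have hderiv (τ : ℝ) : HasDerivAt (fun τ => -exp (-τ ^ 2) / 2) (τ * exp (-τ ^ 2)) τ := by
    refine ((hasDerivAt_pow 2 τ).fun_neg.exp.fun_neg.div_const 2).congr_deriv ?_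
    norm_num
    ring
  have hlim : Tendsto (fun τ : ℝ => -exp (-τ ^ 2) / 2) atTop (𝓝 0) := by
    simpa using ((tendsto_exp_atBot.comp (tendsto_neg_atTop_atBot.comp
      (tendsto_pow_atTop two_ne_zero))).neg.div_const 2)
  rw [integral_Ioi_of_hasDerivAt_of_nonneg (by fun_prop) (fun τ _ => hderiv τ)
    (fun τ hτ => mul_nonneg (hx.trans hτ.out.le) (exp_pos _).le) hlim]
  ring

/-- On `(x, ∞)` the Gaussian is dominated by `(τ / x) e^{-τ²}`, whose integral is explicit. -/
lemma erfc_lt {x : ℝ} (hx : 0 < x) : erfc x < exp (-x ^ 2) / (x * √π) := by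
  have hint : IntegrableOn (fun τ : ℝ => τ * exp (-τ ^ 2) - x * exp (-τ ^ 2)) (Ioi x) :=
    (integrableOn_mul_exp_neg_sq _).sub ((integrableOn_exp_neg_sq _).const_mul x)
  have hpos : ∀ τ ∈ Ioi x, 0 < τ * exp (-τ ^ 2) - x * exp (-τ ^ 2) := fun τ hτ => by
    rw [← sub_mul]
    exact mul_pos (sub_pos.2 hτ) (exp_pos _)
  have hgap : 0 < ∫ τ in Ioi x, (τ * exp (-τ ^ 2) - x * exp (-τ ^ 2)) := by
    rw [setIntegral_pos_iff_support_of_nonneg_ae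
      ((ae_restrict_iff' measurableSet_Ioi).2 (Eventually.of_forall fun τ hτ => (hpos τ hτ).le))
      hint]
    exact (Measure.measure_Ioi_pos _ x).trans_le
      (measure_mono fun τ hτ => ⟨(hpos τ hτ).ne', hτ⟩)
  rw [integral_sub (integrableOn_mul_exp_neg_sq _)
    ((integrableOn_exp_neg_sq _).const_mul x), integral_Ioi_mul_exp_neg_sq hx.le,
    integral_const_mul] at hgap
  rw [erfc, lt_div_iff₀ (by positivity)]
  have : 0 < √π := by positivity
  field_simp
  nlinarith

noncomputable def scaledErfc (μ t : ℝ) : ℝ :=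
  exp (μ ^ 2 * t) * erfc (μ * √t)

lemma qFun_eq (μ t : ℝ) : qFun μ t = t ^ (-(1 : ℝ) / 2) / √π - μ * scaledErfc μ t := by
  rw [qFun, scaledErfc, mul_assoc]

lemma scaledErfc_zero (μ : ℝ) : scaledErfc μ 0 = 1 := by
  simp [scaledErfc, erfc_zero]

lemma scaledErfc_nonneg (μ t : ℝ) : 0 ≤ scaledErfc μ t :=
  mul_nonneg (exp_pos _).le (erfc_nonneg _)

lemma continuous_scaledErfc (μ : ℝ) : Continuous (scaledErfc μ) :=
  (continuous_exp.comp (continuous_const_mul _)).mul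
    (continuous_erfc.comp (continuous_sqrt.const_mul μ))

lemma exp_neg_sq_mul_sqrt (μ : ℝ) {t : ℝ} (ht : 0 ≤ t) :
    exp (-(μ * √t) ^ 2) = (exp (μ ^ 2 * t))⁻¹ := by
  rw [← exp_neg, mul_pow, sq_sqrt ht]

lemma rpow_neg_one_div_two {t : ℝ} (ht : 0 ≤ t) : t ^ (-(1 : ℝ) / 2) = (√t)⁻¹ := by
  rw [neg_div, rpow_neg ht, sqrt_eq_rpow]

lemma hasDerivAt_scaledErfc (μ : ℝ) {t : ℝ} (ht : 0 < t) :
    HasDerivAt (scaledErfc μ) (-μ * qFun μ t) t := by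
  have hsqrt : HasDerivAt (fun u => μ * √u) (μ * (1 / (2 * √t))) t :=
    (hasDerivAt_sqrt ht.ne').const_mul μ
  have hexp : HasDerivAt (fun u => exp (μ ^ 2 * u)) (exp (μ ^ 2 * t) * (μ ^ 2 * 1)) t :=
    ((hasDerivAt_id t).const_mul _).exp
  refine (hexp.mul ((hasDerivAt_erfc _).comp t hsqrt)).congr_deriv ?_
  have hst : √t ≠ 0 := by positivity
  rw [qFun_eq, rpow_neg_one_div_two ht.le, scaledErfc, exp_neg_sq_mul_sqrt μ ht.le]
  field_simp
  simp only [Function.comp_apply]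
  ring

lemma mul_scaledErfc_lt {μ t : ℝ} (hμ : 0 < μ) (ht : 0 < t) :
    μ * scaledErfc μ t < t ^ (-(1 : ℝ) / 2) / √π := by
  have hx : 0 < μ * √t := by positivity
  calc μ * scaledErfc μ t
      < μ * exp (μ ^ 2 * t) * (exp (-(μ * √t) ^ 2) / (μ * √t * √π)) := by
        rw [scaledErfc, ← mul_assoc]
        exact mul_lt_mul_of_pos_left (erfc_lt hx) (by positivity)
    _ = t ^ (-(1 : ℝ) / 2) / √π := by
        rw [rpow_neg_one_div_two ht.le, exp_neg_sq_mul_sqrt μ ht.le]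
        field_simp

lemma qFun_pos {μ t : ℝ} (hμ : 0 < μ) (ht : 0 < t) : 0 < qFun μ t := by
  rw [qFun_eq]
  exact sub_pos.2 (mul_scaledErfc_lt hμ ht)

lemma tendsto_mul_scaledErfc_atTop {μ : ℝ} (hμ : 0 < μ) :
    Tendsto (fun t => μ * scaledErfc μ t) atTop (𝓝 0) := by
  have hbound : Tendsto (fun t : ℝ => t ^ (-(1 : ℝ) / 2) / √π) atTop (𝓝 0) := by
    simpa [neg_div] using (tendsto_rpow_neg_atTop (y := 1 / 2) (by norm_num)).div_const √π
  refine tendsto_of_tendsto_of_tendsto_of_le_of_le' tendsto_const_nhds hbound ?_ ?_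
  · exact Eventually.of_forall fun t => mul_nonneg hμ.le (scaledErfc_nonneg μ t)
  · filter_upwards [eventually_gt_atTop 0] with t ht using (mul_scaledErfc_lt hμ ht).le

lemma hasDerivAt_exp_mul_sub_scaledErfc (a b : ℝ) {t : ℝ} (ht : 0 < t) :
    HasDerivAt (fun s => exp (-a ^ 2 * s) * (a * scaledErfc a s - b * scaledErfc b s))
      ((b ^ 2 - a ^ 2) * (exp (-a ^ 2 * t) * qFun b t)) t := by
  have hexp : HasDerivAt (fun s => exp (-a ^ 2 * s)) (exp (-a ^ 2 * t) * (-a ^ 2 * 1)) t :=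
    ((hasDerivAt_id t).const_mul _).exp
  refine (hexp.mul (((hasDerivAt_scaledErfc a ht).const_mul a).fun_sub
    ((hasDerivAt_scaledErfc b ht).const_mul b))).congr_deriv ?_
  rw [qFun_eq, qFun_eq]
  ring

lemma integral_exp_mul_qFun_of_ne {a b : ℝ} (ha : 0 < a) (hb : 0 < b) (hab : a ≠ b) :
    IntegrableOn (fun s => exp (-a ^ 2 * s) * qFun b s) (Ioi 0) ∧
      ∫ s in Ioi 0, exp (-a ^ 2 * s) * qFun b s = 1 / (a + b) := by
  have hsq : b ^ 2 - a ^ 2 ≠ 0 := by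
    rw [sq_sub_sq]
    exact mul_ne_zero (by positivity) (sub_ne_zero.2 hab.symm)
  set G := fun s => exp (-a ^ 2 * s) * (a * scaledErfc a s - b * scaledErfc b s) / (b ^ 2 - a ^ 2)
  have hcont : ContinuousWithinAt G (Ici 0) 0 := by
    have := continuous_scaledErfc a
    have := continuous_scaledErfc b
    fun_prop
  have hderiv : ∀ t ∈ Ioi (0 : ℝ), HasDerivAt G (exp (-a ^ 2 * t) * qFun b t) t := fun t ht =>
    ((hasDerivAt_exp_mul_sub_scaledErfc a b ht).div_const _).congr_deriv (by field_simp)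
  have hnonneg : ∀ t ∈ Ioi (0 : ℝ), 0 ≤ exp (-a ^ 2 * t) * qFun b t := fun t ht =>
    mul_nonneg (exp_pos _).le (qFun_pos hb ht).le
  have hlim : Tendsto G atTop (𝓝 0) := by
    have hexp : Tendsto (fun s => exp (-a ^ 2 * s)) atTop (𝓝 0) := by
      refine (tendsto_exp_neg_atTop_nhds_zero.comp
        (tendsto_id.const_mul_atTop (pow_pos ha 2))).congr fun s => ?_
      simp [neg_mul]
    simpa [G] using (hexp.mul ((tendsto_mul_scaledErfc_atTop ha).sub
      (tendsto_mul_scaledErfc_atTop hb))).div_const (b ^ 2 - a ^ 2)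
  refine ⟨integrableOn_Ioi_deriv_of_nonneg hcont hderiv hnonneg hlim, ?_⟩
  rw [integral_Ioi_of_hasDerivAt_of_nonneg hcont hderiv hnonneg hlim]
  simp only [G, scaledErfc_zero, mul_zero, exp_zero]
  field_simp
  ring

lemma continuousOn_exp_mul_qFun (a b : ℝ) :
    ContinuousOn (fun s => exp (-a ^ 2 * s) * qFun b s) (Ioi 0) := by
  have := continuous_scaledErfc b
  simp_rw [qFun_eq]
  exact ContinuousOn.mul (by fun_prop) (((continuousOn_id.rpow_const fun s hs =>
    Or.inl (ne_of_gt hs)).div_const _).sub (by fun_prop))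

lemma exp_mul_qFun_le_of_le {b c d s : ℝ} (hb : 0 < b) (hc : 0 ≤ c) (hcd : c ≤ d) (hs : 0 < s) :
    exp (-d ^ 2 * s) * qFun b s ≤ exp (-c ^ 2 * s) * qFun b s := by
  gcongr
  exact (qFun_pos hb hs).le

lemma integral_exp_mul_qFun_le_of_le {b c d : ℝ} (hb : 0 < b) (hc : 0 ≤ c) (hcd : c ≤ d)
    (hic : IntegrableOn (fun s => exp (-c ^ 2 * s) * qFun b s) (Ioi 0))
    (hid : IntegrableOn (fun s => exp (-d ^ 2 * s) * qFun b s) (Ioi 0)) :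
    ∫ s in Ioi 0, exp (-d ^ 2 * s) * qFun b s ≤ ∫ s in Ioi 0, exp (-c ^ 2 * s) * qFun b s :=
  setIntegral_mono_on hid hic measurableSet_Ioi fun _ hs => exp_mul_qFun_le_of_le hb hc hcd hs

lemma integral_exp_mul_qFun {a b : ℝ} (ha : 0 < a) (hb : 0 < b) :
    IntegrableOn (fun s => exp (-a ^ 2 * s) * qFun b s) (Ioi 0) ∧
      ∫ s in Ioi 0, exp (-a ^ 2 * s) * qFun b s = 1 / (a + b) := by
  rcases ne_or_eq a b with hab | rfl
  · exact integral_exp_mul_qFun_of_ne ha hb hab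
  have hint : IntegrableOn (fun s => exp (-a ^ 2 * s) * qFun a s) (Ioi 0) := by
    refine (integral_exp_mul_qFun_of_ne (half_pos ha) ha (half_lt_self ha).ne).1.mono'
      ((continuousOn_exp_mul_qFun a a).aestronglyMeasurable measurableSet_Ioi) ?_
    refine (ae_restrict_iff' measurableSet_Ioi).2 (Eventually.of_forall fun s hs => ?_)
    rw [norm_of_nonneg (mul_nonneg (exp_pos _).le (qFun_pos ha hs).le)]
    exact exp_mul_qFun_le_of_le ha (half_pos ha).le (half_le_self ha.le) hs
  have hbelow : ∀ᶠ c in 𝓝[<] a, ∫ s in Ioi 0, exp (-a ^ 2 * s) * qFun a s ≤ 1 / (c + a) := by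
    filter_upwards [Ioo_mem_nhdsLT ha] with c hc
    obtain ⟨hic, hIc⟩ := integral_exp_mul_qFun_of_ne hc.1 ha hc.2.ne
    exact (integral_exp_mul_qFun_le_of_le ha hc.1.le hc.2.le hic hint).trans_eq hIc
  have habove : ∀ᶠ c in 𝓝[>] a, 1 / (c + a) ≤ ∫ s in Ioi 0, exp (-a ^ 2 * s) * qFun a s := by
    filter_upwards [self_mem_nhdsWithin] with c (hc : a < c)
    obtain ⟨hic, hIc⟩ := integral_exp_mul_qFun_of_ne (ha.trans hc) ha hc.ne'
    exact hIc.symm.trans_le (integral_exp_mul_qFun_le_of_le ha ha.le hc.le hint hic)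
  have hcont : ContinuousAt (fun c => 1 / (c + a)) a :=
    continuousAt_const.div (continuousAt_id.add continuousAt_const) (by positivity)
  exact ⟨hint, le_antisymm (ge_of_tendsto (hcont.tendsto.mono_left nhdsWithin_le_nhds) hbelow)
    (le_of_tendsto (hcont.tendsto.mono_left nhdsWithin_le_nhds) habove)⟩

lemma strictMonoOn_intervalIntegral_of_pos {f : ℝ → ℝ} {a : ℝ} (hf : IntegrableOn f (Ioi a))
    (hpos : ∀ x ∈ Ioi a, 0 < f x) : StrictMonoOn (fun t => ∫ x in a..t, f x) (Ici a) := by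
  have hii {u v : ℝ} (hu : a ≤ u) (huv : u ≤ v) : IntervalIntegrable f volume u v :=
    (intervalIntegrable_iff_integrableOn_Ioc_of_le huv).2
      (hf.mono_set fun x hx => hu.trans_lt hx.1)
  intro t₁ ht₁ t₂ ht₂ ht
  dsimp only
  rw [← intervalIntegral.integral_add_adjacent_intervals (hii le_rfl ht₁) (hii ht₁ ht.le)]
  exact lt_add_of_pos_right _ (intervalIntegral.intervalIntegral_pos_of_pos_on (hii ht₁ ht.le)
    (fun x hx => hpos x (ht₁.trans_lt hx.1)) ht)

/-- **Large-time behaviour, part (i).** With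
`η̄(t) = −b ∫_0^t e^{−a²s} q^b(s) ds`: `q^b > 0` on `(0,∞)`, `η̄` is strictly
decreasing on `[0,∞)`, `∫_0^∞ e^{−a²s} q^b(s) ds = 1/(a+b)`, and
`η̄(t) → −b/(b+a)` as `t → ∞`. -/
theorem stmt13 (a b : ℝ) (ha : 0 < a) (hb : 0 < b)
    (ηbar : ℝ → ℝ)
    (hηbar : ∀ t : ℝ, ηbar t = -b * ∫ s in (0 : ℝ)..t, Real.exp (-a ^ 2 * s) * qFun b s) :
    (∀ s > (0 : ℝ), 0 < qFun b s) ∧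
    StrictAntiOn ηbar (Set.Ici 0) ∧
    (∫ s in Set.Ioi (0 : ℝ), Real.exp (-a ^ 2 * s) * qFun b s) = 1 / (a + b) ∧
    Filter.Tendsto ηbar Filter.atTop (nhds (-(b / (b + a)))) := by
  obtain ⟨hint, hI⟩ := integral_exp_mul_qFun ha hb
  refine ⟨fun s hs => qFun_pos hb hs, fun t₁ ht₁ t₂ ht₂ ht => ?_, hI, ?_⟩
  · have := strictMonoOn_intervalIntegral_of_pos hint
      (fun s hs => mul_pos (exp_pos _) (qFun_pos hb hs)) ht₁ ht₂ ht
    rw [hηbar, hηbar]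
    nlinarith
  · have hlim := (intervalIntegral_tendsto_integral_Ioi 0 hint tendsto_id).const_mul (-b)
    rw [hI, add_comm, mul_one_div, neg_div] at hlim
    exact hlim.congr fun t => (hηbar t).symm
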